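/- arXiv:2506.13025 — 6 statements merged into one kernel-verified Lean document; each statement's English description precedes it below -/
import Mathlib

section
/- Let (ε_X, ε_A, ε_Y, ε_R) be mutually independent random elements on a probability space, taking values in standard Borel spaces, and let f_X, f_A, f_Y, f_R be measurable functions. Define X = f_X(ε_X), A¹ = f_A(X, ε_A), and, for a fixed treatment value a, define the counterfactuals Y^a = f_Y(X, a, ε_Y) and R^a = f_R(X, Y^a, ε_R). Then, conditionally on the sigma-algebra generated by X, the random variable A¹ is independent of the pair (Y^a, R^a). -/
/-!
Given `X`, the exposure `A¹` is a measurable function of `(X, ε_A)` and the pair `(Yᵃ, Rᵃ)` one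
of `(X, (ε_Y, ε_R))`. Because `X` is independent of the noises, a conditional probability of an
event in `X` and the noises is obtained by freezing `X` and measuring the section under the law
of the noises; because `ε_A` and `(ε_Y, ε_R)` are independent, that law is a product measure, on
which the section of the joint event is a rectangle, and its measure factors.
-/

open MeasureTheory ProbabilityTheory

namespace ProbabilityTheory

variable {Ω α : Type*} {mΩ : MeasurableSpace Ω} {mα : MeasurableSpace α}
  {μ : Measure Ω} [IsFiniteMeasure μ] {X : Ω → α}

lemma condExp_preimage_prodMk_ae_eq_measureReal_preimage {γ : Type*} {mγ : MeasurableSpace γ}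
    [StandardBorelSpace γ] [Nonempty γ] {W : Ω → γ} (hX : Measurable X) (hW : Measurable W)
    (hXW : IndepFun X W μ) {s : Set (α × γ)} (hs : MeasurableSet s) :
    μ⟦(fun ω ↦ (X ω, W ω)) ⁻¹' s | mα.comap X⟧ =ᵐ[μ]
      fun ω ↦ (μ.map W).real (Prod.mk (X ω) ⁻¹' s) := by
  have hcondDistrib : ∀ᵐ ω ∂μ, condDistrib W X μ (X ω) = μ.map W := by
    refine ae_of_ae_map hX.aemeasurable
      (condDistrib_ae_eq_of_measure_eq_compProd_of_measurable (κ := Kernel.const α (μ.map W))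
        hX hW ?_)
    rw [Measure.compProd_const]
    exact (indepFun_iff_map_prod_eq_prod_map_map hX.aemeasurable hW.aemeasurable).1 hXW
  have hint : Integrable (fun ω ↦ s.indicator (1 : α × γ → ℝ) (X ω, W ω)) μ :=
    (integrable_const 1).indicator (hs.preimage (hX.prodMk hW))
  filter_upwards [condExp_prod_ae_eq_integral_condDistrib hX hW.aemeasurable
    (stronglyMeasurable_const.indicator hs) hint, hcondDistrib] with ω hω hlaw
  rw [← integral_indicator_one (measurable_prodMk_left hs), ← hlaw]
  exact hω

lemma condIndepFun_comap_of_indepFun [StandardBorelSpace Ω] {β γ δ δ' : Type*}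
    {mβ : MeasurableSpace β} [StandardBorelSpace β] [Nonempty β]
    {mγ : MeasurableSpace γ} [StandardBorelSpace γ] [Nonempty γ]
    {_ : MeasurableSpace δ} {_ : MeasurableSpace δ'}
    {U : Ω → β} {V : Ω → γ} (hX : Measurable X) (hU : Measurable U) (hV : Measurable V)
    (hXUV : IndepFun X (fun ω ↦ (U ω, V ω)) μ) (hUV : IndepFun U V μ)
    {φ : α × β → δ} {ψ : α × γ → δ'} (hφ : Measurable φ) (hψ : Measurable ψ) :
    CondIndepFun (mα.comap X) hX.comap_le (fun ω ↦ φ (X ω, U ω)) (fun ω ↦ ψ (X ω, V ω)) μ := by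
  rw [condIndepFun_iff_condExp_inter_preimage_eq_mul (by fun_prop) (by fun_prop)]
  intro s t hs ht
  have hlaw : μ.map (fun ω ↦ (U ω, V ω)) = (μ.map U).prod (μ.map V) :=
    (indepFun_iff_map_prod_eq_prod_map_map hU.aemeasurable hV.aemeasurable).1 hUV
  filter_upwards [
    condExp_preimage_prodMk_ae_eq_measureReal_preimage hX (hU.prodMk hV) hXUV
      (s := {p | φ (p.1, p.2.1) ∈ s ∧ ψ (p.1, p.2.2) ∈ t}) (by measurability),
    condExp_preimage_prodMk_ae_eq_measureReal_preimage hX hU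
      (hXUV.comp measurable_id measurable_fst) (hφ hs),
    condExp_preimage_prodMk_ae_eq_measureReal_preimage hX hV
      (hXUV.comp measurable_id measurable_snd) (hψ ht)] with ω hinter hleft hright
  calc _ = (μ.map fun ω ↦ (U ω, V ω)).real
          ((Prod.mk (X ω) ⁻¹' (φ ⁻¹' s)) ×ˢ (Prod.mk (X ω) ⁻¹' (ψ ⁻¹' t))) := hinter
    _ = _ := by rw [hlaw, measureReal_prod_prod, ← hleft, ← hright]; rfl

end ProbabilityTheory

theorem stmt0_general
    {Ω : Type} [MeasurableSpace Ω] [StandardBorelSpace Ω]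
    (μ : Measure Ω) [IsProbabilityMeasure μ]
    {E : Fin 4 → Type} [∀ i, MeasurableSpace (E i)] [∀ i, StandardBorelSpace (E i)]
    {SX SA SY SR : Type}
    [MeasurableSpace SX]
    [MeasurableSpace SA]
    [MeasurableSpace SY]
    [MeasurableSpace SR]
    (ε : ∀ i, Ω → E i) (hε : ∀ i, Measurable (ε i))
    (hindep : iIndepFun ε μ)
    (fX : E 0 → SX) (fA : SX × E 1 → SA) (fY : SX × SA × E 2 → SY)
    (fR : SX × SY × E 3 → SR)
    (hfX : Measurable fX) (hfA : Measurable fA) (hfY : Measurable fY)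
    (hfR : Measurable fR)
    (a : SA)
    (X : Ω → SX) (A1 : Ω → SA) (Ya : Ω → SY) (Ra : Ω → SR)
    (hX : X = fun ω => fX (ε 0 ω))
    (hA1 : A1 = fun ω => fA (X ω, ε 1 ω))
    (hYa : Ya = fun ω => fY (X ω, a, ε 2 ω))
    (hRa : Ra = fun ω => fR (X ω, Ya ω, ε 3 ω))
    (hXm : Measurable X) :
    CondIndepFun (MeasurableSpace.comap X inferInstance) hXm.comap_le
      A1 (fun ω => (Ya ω, Ra ω)) μ := by
  subst hA1 hRa hYa hX
  have : Nonempty Ω := μ.nonempty_of_neZero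
  have : ∀ i, Nonempty (E i) := fun i ↦ ⟨ε i (Classical.arbitrary Ω)⟩
  have hX_indep : IndepFun (fun ω ↦ fX (ε 0 ω)) (fun ω ↦ (ε 1 ω, ε 2 ω, ε 3 ω)) μ :=
    (hindep.indepFun_finset {0} {1, 2, 3} (by decide) hε).comp
      (φ := fun e : ∀ i : ({0} : Finset (Fin 4)), E i ↦ fX (e ⟨0, by simp⟩))
      (ψ := fun e : ∀ i : ({1, 2, 3} : Finset (Fin 4)), E i ↦
        ((e ⟨1, by simp⟩, e ⟨2, by simp⟩, e ⟨3, by simp⟩) : E 1 × E 2 × E 3))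
      (by fun_prop) (by fun_prop)
  exact condIndepFun_comap_of_indepFun hXm (hε 1) ((hε 2).prodMk (hε 3)) hX_indep
    (hindep.indepFun_prodMk hε 2 3 1 (by decide) (by decide)).symm hfA
    (ψ := fun p ↦ (fY (p.1, a, p.2.1), fR (p.1, fY (p.1, a, p.2.1), p.2.2))) (by fun_prop)

/-- **SWIG conditional independence for the m-DAG X → A¹, A¹ → Y, X → Y, Y → R, X → R.**
Let `ε 0, ε 1, ε 2, ε 3` be mutually independent random elements on a probability space
`(Ω, μ)`, taking values in standard Borel spaces `E 0, E 1, E 2, E 3`, and let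
`fX, fA, fY, fR` be measurable structural functions.  Define `X = fX (ε 0)`,
`A¹ = fA (X, ε 1)` and, for a fixed treatment value `a`, the counterfactuals
`Yᵃ = fY (X, a, ε 2)` and `Rᵃ = fR (X, Yᵃ, ε 3)`.  Then, conditionally on the
sigma-algebra generated by `X`, the random variable `A¹` is independent of the
pair `(Yᵃ, Rᵃ)`. -/
theorem stmt0
    {Ω : Type} [MeasurableSpace Ω] [StandardBorelSpace Ω]
    (μ : Measure Ω) [IsProbabilityMeasure μ]
    {E : Fin 4 → Type} [∀ i, MeasurableSpace (E i)] [∀ i, StandardBorelSpace (E i)]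
    {SX SA SY SR : Type}
    [MeasurableSpace SX] [StandardBorelSpace SX]
    [MeasurableSpace SA] [StandardBorelSpace SA]
    [MeasurableSpace SY] [StandardBorelSpace SY]
    [MeasurableSpace SR] [StandardBorelSpace SR]
    (ε : ∀ i, Ω → E i) (hε : ∀ i, Measurable (ε i))
    (hindep : iIndepFun ε μ)
    (fX : E 0 → SX) (fA : SX × E 1 → SA) (fY : SX × SA × E 2 → SY)
    (fR : SX × SY × E 3 → SR)
    (hfX : Measurable fX) (hfA : Measurable fA) (hfY : Measurable fY)
    (hfR : Measurable fR)
    (a : SA)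
    (X : Ω → SX) (A1 : Ω → SA) (Ya : Ω → SY) (Ra : Ω → SR)
    (hX : X = fun ω => fX (ε 0 ω))
    (hA1 : A1 = fun ω => fA (X ω, ε 1 ω))
    (hYa : Ya = fun ω => fY (X ω, a, ε 2 ω))
    (hRa : Ra = fun ω => fR (X ω, Ya ω, ε 3 ω))
    (hXm : Measurable X) :
    CondIndepFun (MeasurableSpace.comap X inferInstance) hXm.comap_le
      A1 (fun ω => (Ya ω, Ra ω)) μ :=
  stmt0_general μ ε hε hindep fX fA fY fR hfX hfA hfY hfR a X A1 Ya Ra hX hA1 hYa hRa hXm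
end

section
/- Let X, A¹ be random variables with values in finite sets 𝒳 and 𝒜, let (Y^a)_{a∈𝒜} be real-valued random variables with finite range, let Y = Y^{A¹}, let R be {0,1}-valued with A = A¹ on {R=1}. Fix a ∈ 𝒜 and x ∈ 𝒳, and assume: (i) no unmeasured confounding, A¹ ⫫ Y^a | X; (ii) missing at random, R ⫫ A¹ | (X, Y); (iii) positivity, P(X=x, A¹=a) > 0 and P(R=1 | X=x', Y=y') > 0 for all (x', y') with positive probability. Define λ_a(x', y') = P(A = a | X = x', Y = y', R = 1). Then E(Y^a | X = x) = E(Y · λ_a(X, Y) | X = x) / E(λ_a(X, Y) | X = x). -/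
/-!
Missing at random together with `A = A¹` on `{R = 1}` gives `λ_a(x, y) = P(A¹ = a | X = x, Y = y)`
wherever `P(X = x, Y = y) > 0`. Hence, by the chain rule and consistency `Y = Yᵃ` on `{A¹ = a}`,
`λ_a(x, y) P(Y = y | X = x) = P(A¹ = a, Yᵃ = y | X = x)`, which no unmeasured confounding factors as
`P(A¹ = a | X = x) P(Yᵃ = y | X = x)`. Summing over `y`, the numerator and the denominator are
`P(A¹ = a | X = x)` times `E(Yᵃ | X = x)` and times `1`.
-/

open MeasureTheory

/-- `pr μ s` is the probability of the event `s`, as a real number. -/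
noncomputable def pr {Ω : Type*} [MeasurableSpace Ω] (μ : Measure Ω) (s : Set Ω) : ℝ :=
  (μ s).toReal

/-- `cpr μ s t` is the conditional probability of `s` given `t`, as a real number. -/
noncomputable def cpr {Ω : Type*} [MeasurableSpace Ω] (μ : Measure Ω) (s t : Set Ω) : ℝ :=
  pr μ (s ∩ t) / pr μ t

/-- `landa μ X Y A R a x' y'` is `λ_a(x', y') = P(A = a | X = x', Y = y', R = 1)`. -/
noncomputable def landa {Ω 𝒳 𝒜 : Type*} [MeasurableSpace Ω] (μ : Measure Ω)
    (X : Ω → 𝒳) (Y : Ω → ℝ) (A : Ω → 𝒜) (R : Ω → Bool) (a : 𝒜) (x' : 𝒳) (y' : ℝ) : ℝ :=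
  cpr μ {ω | A ω = a} {ω | X ω = x' ∧ Y ω = y' ∧ R ω = true}

section ConditionalProbability

variable {Ω : Type*} [MeasurableSpace Ω] {μ : Measure Ω} {s t u : Set Ω}

theorem pr_nonneg : 0 ≤ pr μ s := measureReal_nonneg

theorem pr_mono [IsFiniteMeasure μ] (h : s ⊆ t) : pr μ s ≤ pr μ t := measureReal_mono h

theorem cpr_congr_left {s' : Set Ω} (h : ∀ ω ∈ t, ω ∈ s ↔ ω ∈ s') :
    cpr μ s t = cpr μ s' t := by
  have hst : s ∩ t = s' ∩ t := Set.ext fun ω =>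
    ⟨fun hω => ⟨(h ω hω.2).1 hω.1, hω.2⟩, fun hω => ⟨(h ω hω.2).2 hω.1, hω.2⟩⟩
  rw [cpr, cpr, hst]

theorem cpr_eq_zero_of_pr_inter_eq_zero (h : pr μ (t ∩ u) = 0) : cpr μ u t = 0 := by
  rw [cpr, Set.inter_comm, h, zero_div]

/-- The chain rule; it needs no positivity because `cpr μ s ∅ = 0` by the junk value of `/`. -/
theorem cpr_inter_mul_cpr [IsFiniteMeasure μ] :
    cpr μ s (t ∩ u) * cpr μ u t = cpr μ (s ∩ u) t := by
  have hassoc : s ∩ (t ∩ u) = s ∩ u ∩ t := by rw [Set.inter_comm t, Set.inter_assoc]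
  rw [cpr, cpr, cpr, hassoc, Set.inter_comm u]
  rcases (pr_nonneg (μ := μ) (s := t ∩ u)).eq_or_lt with htu | htu
  · have hsut : pr μ (s ∩ u ∩ t) = 0 :=
      le_antisymm (htu ▸ hassoc ▸ pr_mono Set.inter_subset_right) pr_nonneg
    rw [← htu, hsut, div_zero, zero_div, zero_mul]
  · exact div_mul_div_cancel₀ htu.ne'

theorem cpr_inter_eq_of_cpr_inter_eq_mul [IsFiniteMeasure μ]
    (hind : cpr μ (u ∩ s) t = cpr μ u t * cpr μ s t) (hu : cpr μ u t ≠ 0) :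
    cpr μ s (t ∩ u) = cpr μ s t := by
  apply mul_right_cancel₀ hu
  rw [cpr_inter_mul_cpr, Set.inter_comm, hind, mul_comm]

theorem sum_cpr_eq_one [IsFiniteMeasure μ] {β : Type*} [MeasurableSpace β]
    [MeasurableSingletonClass β] {Z : Ω → β} (hZ : Measurable Z) (S : Finset β)
    (hS : ∀ ω, Z ω ∈ S) (ht : pr μ t ≠ 0) :
    ∑ y ∈ S, cpr μ {ω | Z ω = y} t = 1 := by
  have hfibers : ∀ y ∈ S, MeasurableSet (Z ⁻¹' {y}) := fun y _ => hZ (measurableSet_singleton y)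
  have hcover : Z ⁻¹' S = Set.univ := Set.eq_univ_of_forall hS
  unfold cpr
  rw [← div_self ht, ← Finset.sum_div]
  congr 1
  calc ∑ y ∈ S, pr μ (Z ⁻¹' {y} ∩ t)
      = ∑ y ∈ S, (μ.restrict t).real (Z ⁻¹' {y}) :=
        Finset.sum_congr rfl fun y hy => (measureReal_restrict_apply (hfibers y hy)).symm
    _ = pr μ t := by
        rw [sum_measureReal_preimage_singleton S hfibers, hcover, measureReal_restrict_apply_univ]
        rfl

end ConditionalProbability

theorem landa_eq_cpr_of_missingAtRandom {Ω 𝒳 𝒜 : Type*} [MeasurableSpace Ω] {μ : Measure Ω}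
    [IsFiniteMeasure μ] {X : Ω → 𝒳} {Y : Ω → ℝ} {A A1 : Ω → 𝒜} {R : Ω → Bool}
    (hconsA : ∀ ω, R ω = true → A ω = A1 ω) {a : 𝒜} {x : 𝒳} {y : ℝ}
    (hMAR : cpr μ {ω | R ω = true ∧ A1 ω = a} {ω | X ω = x ∧ Y ω = y} =
      cpr μ {ω | R ω = true} {ω | X ω = x ∧ Y ω = y} *
        cpr μ {ω | A1 ω = a} {ω | X ω = x ∧ Y ω = y})
    (hR : cpr μ {ω | R ω = true} {ω | X ω = x ∧ Y ω = y} ≠ 0) :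
    landa μ X Y A R a x y = cpr μ {ω | A1 ω = a} {ω | X ω = x ∧ Y ω = y} := by
  have hcond : {ω | X ω = x ∧ Y ω = y ∧ R ω = true} =
      {ω | X ω = x ∧ Y ω = y} ∩ {ω | R ω = true} := Set.ext fun _ => and_assoc.symm
  rw [landa, hcond, cpr_congr_left (s := {ω | A ω = a}) (s' := {ω | A1 ω = a})
    fun ω hω => show A ω = a ↔ A1 ω = a by rw [hconsA ω hω.2]]
  exact cpr_inter_eq_of_cpr_inter_eq_mul hMAR hR

theorem landa_mul_cpr_eq_of_missingAtRandom {Ω 𝒳 𝒜 : Type*} [MeasurableSpace Ω]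
    {μ : Measure Ω} [IsFiniteMeasure μ] {X : Ω → 𝒳} {Y : Ω → ℝ} {A A1 : Ω → 𝒜} {R : Ω → Bool}
    (hconsA : ∀ ω, R ω = true → A ω = A1 ω) {a : 𝒜} {x : 𝒳} {y : ℝ}
    (hMAR : 0 < pr μ {ω | X ω = x ∧ Y ω = y} →
      cpr μ {ω | R ω = true ∧ A1 ω = a} {ω | X ω = x ∧ Y ω = y} =
        cpr μ {ω | R ω = true} {ω | X ω = x ∧ Y ω = y} *
          cpr μ {ω | A1 ω = a} {ω | X ω = x ∧ Y ω = y})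
    (hR : 0 < pr μ {ω | X ω = x ∧ Y ω = y} →
      0 < cpr μ {ω | R ω = true} {ω | X ω = x ∧ Y ω = y}) :
    landa μ X Y A R a x y * cpr μ {ω | Y ω = y} {ω | X ω = x} =
      cpr μ {ω | A1 ω = a} {ω | X ω = x ∧ Y ω = y} * cpr μ {ω | Y ω = y} {ω | X ω = x} := by
  rcases (pr_nonneg (μ := μ) (s := {ω | X ω = x ∧ Y ω = y})).eq_or_lt with hxy | hxy
  · rw [cpr_eq_zero_of_pr_inter_eq_zero (t := {ω | X ω = x}) (u := {ω | Y ω = y}) hxy.symm,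
      mul_zero, mul_zero]
  · rw [landa_eq_cpr_of_missingAtRandom hconsA (hMAR hxy) (hR hxy).ne']

theorem stmt3_general
    {Ω : Type*} [MeasurableSpace Ω] (μ : Measure Ω) [IsProbabilityMeasure μ]
    {𝒳 𝒜 : Type*}
    (X : Ω → 𝒳) (A1 : Ω → 𝒜) (A : Ω → 𝒜) (R : Ω → Bool)
    (Ypot : 𝒜 → Ω → ℝ) (Y : Ω → ℝ)
    (hYpotm : ∀ a, Measurable (Ypot a))
    (𝒴 : Finset ℝ) (hrange : ∀ a ω, Ypot a ω ∈ 𝒴)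
    (hconsY : ∀ ω, Y ω = Ypot (A1 ω) ω)
    (hconsA : ∀ ω, R ω = true → A ω = A1 ω)
    (a : 𝒜) (x : 𝒳)
    (hNUC : ∀ x' : 𝒳, 0 < pr μ {ω | X ω = x'} →
      ∀ (a' : 𝒜) (y : ℝ),
        cpr μ {ω | A1 ω = a' ∧ Ypot a ω = y} {ω | X ω = x'} =
          cpr μ {ω | A1 ω = a'} {ω | X ω = x'} *
            cpr μ {ω | Ypot a ω = y} {ω | X ω = x'})
    (hMAR : ∀ (x' : 𝒳) (y' : ℝ), 0 < pr μ {ω | X ω = x' ∧ Y ω = y'} →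
      ∀ (r : Bool) (a' : 𝒜),
        cpr μ {ω | R ω = r ∧ A1 ω = a'} {ω | X ω = x' ∧ Y ω = y'} =
          cpr μ {ω | R ω = r} {ω | X ω = x' ∧ Y ω = y'} *
            cpr μ {ω | A1 ω = a'} {ω | X ω = x' ∧ Y ω = y'})
    (hpos1 : 0 < pr μ {ω | X ω = x ∧ A1 ω = a})
    (hpos2 : ∀ (x' : 𝒳) (y' : ℝ), 0 < pr μ {ω | X ω = x' ∧ Y ω = y'} →
      0 < cpr μ {ω | R ω = true} {ω | X ω = x' ∧ Y ω = y'}) :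
    (∑ y ∈ 𝒴, y * cpr μ {ω | Ypot a ω = y} {ω | X ω = x}) =
      (∑ y ∈ 𝒴, y * landa μ X Y A R a x y * cpr μ {ω | Y ω = y} {ω | X ω = x}) /
        (∑ y ∈ 𝒴, landa μ X Y A R a x y * cpr μ {ω | Y ω = y} {ω | X ω = x}) := by
  have hx : 0 < pr μ {ω | X ω = x} := hpos1.trans_le (pr_mono Set.inter_subset_left)
  have hα : cpr μ {ω | A1 ω = a} {ω | X ω = x} ≠ 0 :=
    (div_pos (by rwa [Set.inter_comm]) hx).ne'
  have key : ∀ y, landa μ X Y A R a x y * cpr μ {ω | Y ω = y} {ω | X ω = x} =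
      cpr μ {ω | A1 ω = a} {ω | X ω = x} * cpr μ {ω | Ypot a ω = y} {ω | X ω = x} := by
    intro y
    rw [landa_mul_cpr_eq_of_missingAtRandom hconsA (hMAR x y · true a) (hpos2 x y),
      ← hNUC x hx]
    refine (cpr_inter_mul_cpr (t := {ω | X ω = x}) (u := {ω | Y ω = y})).trans
      (cpr_congr_left fun ω _ => and_congr_right fun hA1 => ?_)
    show Y ω = y ↔ Ypot a ω = y
    rw [hconsY ω, hA1]
  have hden : ∑ y ∈ 𝒴, landa μ X Y A R a x y * cpr μ {ω | Y ω = y} {ω | X ω = x} =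
      cpr μ {ω | A1 ω = a} {ω | X ω = x} := by
    rw [Finset.sum_congr rfl fun y _ => key y, ← Finset.mul_sum,
      sum_cpr_eq_one (hYpotm a) 𝒴 (hrange a) hx.ne', mul_one]
  rw [hden, eq_div_iff hα, Finset.sum_mul]
  exact Finset.sum_congr rfl fun y _ => by linear_combination -y * key y

/-- **Identification of `E(Yᵃ | X = x)` with a partially missing exposure.**
`A¹` is the exposure with values in a finite set `𝒜`, `R` its (`Bool`-valued, `true = 1`)
missingness indicator, `A` the observed exposure with `A = A¹` on `{R = 1}`, `X` fully observed
covariates with values in a finite set `𝒳`, `Ypot a = Yᵃ` the real-valued potential outcomes with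
finite range contained in `𝒴`, and `Y = Y^{A¹}` the factual outcome.  Under
(i) no unmeasured confounding `A¹ ⫫ Yᵃ | X`, (ii) missing at random `R ⫫ A¹ | (X, Y)` and
(iii) positivity, one has
`E(Yᵃ | X = x) = E(Y λ_a(X, Y) | X = x) / E(λ_a(X, Y) | X = x)`,
all conditional expectations being finite sums over the range `𝒴`. -/
theorem stmt3
    {Ω : Type*} [MeasurableSpace Ω] (μ : Measure Ω) [IsProbabilityMeasure μ]
    {𝒳 𝒜 : Type*} [Fintype 𝒳] [Fintype 𝒜]
    [MeasurableSpace 𝒳] [MeasurableSingletonClass 𝒳]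
    [MeasurableSpace 𝒜] [MeasurableSingletonClass 𝒜]
    (X : Ω → 𝒳) (A1 : Ω → 𝒜) (A : Ω → 𝒜) (R : Ω → Bool)
    (Ypot : 𝒜 → Ω → ℝ) (Y : Ω → ℝ)
    (hXm : Measurable X) (hA1m : Measurable A1) (hAm : Measurable A) (hRm : Measurable R)
    (hYpotm : ∀ a, Measurable (Ypot a))
    (𝒴 : Finset ℝ) (hrange : ∀ a ω, Ypot a ω ∈ 𝒴)
    (hconsY : ∀ ω, Y ω = Ypot (A1 ω) ω)
    (hconsA : ∀ ω, R ω = true → A ω = A1 ω)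
    (a : 𝒜) (x : 𝒳)
    (hNUC : ∀ x' : 𝒳, 0 < pr μ {ω | X ω = x'} →
      ∀ (a' : 𝒜) (y : ℝ),
        cpr μ {ω | A1 ω = a' ∧ Ypot a ω = y} {ω | X ω = x'} =
          cpr μ {ω | A1 ω = a'} {ω | X ω = x'} *
            cpr μ {ω | Ypot a ω = y} {ω | X ω = x'})
    (hMAR : ∀ (x' : 𝒳) (y' : ℝ), 0 < pr μ {ω | X ω = x' ∧ Y ω = y'} →
      ∀ (r : Bool) (a' : 𝒜),
        cpr μ {ω | R ω = r ∧ A1 ω = a'} {ω | X ω = x' ∧ Y ω = y'} =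
          cpr μ {ω | R ω = r} {ω | X ω = x' ∧ Y ω = y'} *
            cpr μ {ω | A1 ω = a'} {ω | X ω = x' ∧ Y ω = y'})
    (hpos1 : 0 < pr μ {ω | X ω = x ∧ A1 ω = a})
    (hpos2 : ∀ (x' : 𝒳) (y' : ℝ), 0 < pr μ {ω | X ω = x' ∧ Y ω = y'} →
      0 < cpr μ {ω | R ω = true} {ω | X ω = x' ∧ Y ω = y'}) :
    (∑ y ∈ 𝒴, y * cpr μ {ω | Ypot a ω = y} {ω | X ω = x}) =
      (∑ y ∈ 𝒴, y * landa μ X Y A R a x y * cpr μ {ω | Y ω = y} {ω | X ω = x}) /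
        (∑ y ∈ 𝒴, landa μ X Y A R a x y * cpr μ {ω | Y ω = y} {ω | X ω = x}) :=
  stmt3_general μ X A1 A R Ypot Y hYpotm 𝒴 hrange hconsY hconsA a x hNUC hMAR hpos1 hpos2
end

section
/- Let P be a regular observed-data distribution, with nuisance functions ζ, α, β, γ, δ and target θ(P). Define, for an observation o = (x, y, r₁, r₂), φ(o; P) = (1/P(R₁=0, R₂=1)) [ (1−r₁)r₂ (β(x)/α(x) − θ(P)) + (r₁/α(x)) (r₂/ζ(y)) ((1−γ(x))/γ(x)) (y − β(x)/α(x)) − r₁ (r₂/ζ(y) − 1) δ(y) ]. Then E_P[φ(O; P)] = 0. -/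
open Finset

/-- The real value (`0` or `1`) of a bit. -/
noncomputable def bR (r : Bool) : ℝ := if r then 1 else 0

/-- A regular observed-data distribution of `O = (X, Y, R₁, R₂)` on `𝒳 × 𝒴 × {0,1} × {0,1}`
(`Bool`-valued indicators, `true = 1`): a probability mass function with every point of
positive probability. -/
def Regular {𝒳 : Type*} [Fintype 𝒳] (𝒴 : Finset ℝ) (p : 𝒳 → ℝ → Bool → Bool → ℝ) : Prop :=
  (∑ x : 𝒳, ∑ y ∈ 𝒴, ∑ r₁ : Bool, ∑ r₂ : Bool, p x y r₁ r₂) = 1 ∧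
    ∀ (x : 𝒳), ∀ y ∈ 𝒴, ∀ (r₁ r₂ : Bool), 0 < p x y r₁ r₂

/-- `P(R₁ = r₁, R₂ = r₂)`. -/
noncomputable def prR {𝒳 : Type*} [Fintype 𝒳] (𝒴 : Finset ℝ)
    (p : 𝒳 → ℝ → Bool → Bool → ℝ) (r₁ r₂ : Bool) : ℝ :=
  ∑ x : 𝒳, ∑ y ∈ 𝒴, p x y r₁ r₂

/-- `ζ(y) = P(R₂ = 1 | R₁ = 1, Y = y)`. -/
noncomputable def zetaD {𝒳 : Type*} [Fintype 𝒳] (p : 𝒳 → ℝ → Bool → Bool → ℝ) (y : ℝ) : ℝ :=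
  (∑ x : 𝒳, p x y true true) / (∑ x : 𝒳, ∑ r₂ : Bool, p x y true r₂)

/-- `α(x) = E(1/ζ(Y) | R₁ = 1, R₂ = 1, X = x)`. -/
noncomputable def alphaD {𝒳 : Type*} [Fintype 𝒳] (𝒴 : Finset ℝ)
    (p : 𝒳 → ℝ → Bool → Bool → ℝ) (x : 𝒳) : ℝ :=
  ∑ y ∈ 𝒴, (1 / zetaD p y) * (p x y true true / ∑ y' ∈ 𝒴, p x y' true true)

/-- `β(x) = E(Y/ζ(Y) | R₁ = 1, R₂ = 1, X = x)`. -/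
noncomputable def betaD {𝒳 : Type*} [Fintype 𝒳] (𝒴 : Finset ℝ)
    (p : 𝒳 → ℝ → Bool → Bool → ℝ) (x : 𝒳) : ℝ :=
  ∑ y ∈ 𝒴, (y / zetaD p y) * (p x y true true / ∑ y' ∈ 𝒴, p x y' true true)

/-- `γ(x) = P(R₁ = 1 | R₂ = 1, X = x)`. -/
noncomputable def gammaD {𝒳 : Type*} [Fintype 𝒳] (𝒴 : Finset ℝ)
    (p : 𝒳 → ℝ → Bool → Bool → ℝ) (x : 𝒳) : ℝ :=
  (∑ y ∈ 𝒴, p x y true true) / (∑ y ∈ 𝒴, ∑ r₁ : Bool, p x y r₁ true)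

/-- `δ(y) = E((1/α(X)) ((1−γ(X))/γ(X)) (Y − β(X)/α(X)) | R₁ = 1, R₂ = 1, Y = y)`. -/
noncomputable def deltaD {𝒳 : Type*} [Fintype 𝒳] (𝒴 : Finset ℝ)
    (p : 𝒳 → ℝ → Bool → Bool → ℝ) (y : ℝ) : ℝ :=
  ∑ x : 𝒳, (1 / alphaD 𝒴 p x) * ((1 - gammaD 𝒴 p x) / gammaD 𝒴 p x) *
    (y - betaD 𝒴 p x / alphaD 𝒴 p x) * (p x y true true / ∑ x' : 𝒳, p x' y true true)

/-- `θ(P) = E(β(X)/α(X) | R₁ = 0, R₂ = 1)`. -/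
noncomputable def thetaD {𝒳 : Type*} [Fintype 𝒳] (𝒴 : Finset ℝ)
    (p : 𝒳 → ℝ → Bool → Bool → ℝ) : ℝ :=
  ∑ x : 𝒳, (betaD 𝒴 p x / alphaD 𝒴 p x) *
    ((∑ y ∈ 𝒴, p x y false true) / prR 𝒴 p false true)

/-- The influence function `φ(o; P)` of `θ` at the observation `o = (x, y, r₁, r₂)`. -/
noncomputable def phiD {𝒳 : Type*} [Fintype 𝒳] (𝒴 : Finset ℝ)
    (p : 𝒳 → ℝ → Bool → Bool → ℝ) (x : 𝒳) (y : ℝ) (r₁ r₂ : Bool) : ℝ :=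
  (1 / prR 𝒴 p false true) *
    ((1 - bR r₁) * bR r₂ * (betaD 𝒴 p x / alphaD 𝒴 p x - thetaD 𝒴 p) +
      (bR r₁ / alphaD 𝒴 p x) * (bR r₂ / zetaD p y) *
        ((1 - gammaD 𝒴 p x) / gammaD 𝒴 p x) * (y - betaD 𝒴 p x / alphaD 𝒴 p x) -
      bR r₁ * (bR r₂ / zetaD p y - 1) * deltaD 𝒴 p y)

/-!
`E_P[φ]` splits into three sums, each vanishing for its own reason. The first term is
`β(X)/α(X) − θ` on `{R₁ = 0, R₂ = 1}`, and `θ` is by definition the mean of `β(X)/α(X)` there.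
For fixed `x`, the second term is `Y − β(x)/α(x)` weighted by `1/ζ(Y)` on `{R₁ = R₂ = 1}`, and
`β(x)/α(x)` is exactly the `1/ζ(Y)`-weighted mean of `Y` there. For fixed `y`, the third term is
`δ(y)` times `1 − R₂/ζ(y)` on `{R₁ = 1}`, which has mean zero because `ζ(y)` is the probability
of `R₂ = 1` there.
-/

namespace Finset

variable {ι K : Type*} [Field K]

theorem sum_mul_div_sum (s : Finset ι) (f w : ι → K) :
    ∑ i ∈ s, f i * (w i / ∑ j ∈ s, w j) = (∑ i ∈ s, w i * f i) / ∑ j ∈ s, w j := by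
  rw [sum_div]
  exact sum_congr rfl fun i _ => by ring

theorem sum_mul_sub_div_sum_eq_zero (s : Finset ι) (w f : ι → K) (hw : ∑ i ∈ s, w i ≠ 0) :
    ∑ i ∈ s, w i * (f i - (∑ j ∈ s, w j * f j) / ∑ j ∈ s, w j) = 0 := by
  simp only [mul_sub, sum_sub_distrib, ← sum_mul, mul_div_cancel₀ _ hw, sub_self]

end Finset

section Nuisances

variable {𝒳 : Type*} [Fintype 𝒳] {𝒴 : Finset ℝ} {p : 𝒳 → ℝ → Bool → Bool → ℝ}

namespace Regular

theorem nonempty (hp : Regular 𝒴 p) : Nonempty 𝒳 ∧ 𝒴.Nonempty := by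
  by_contra h
  rw [not_and_or, not_nonempty_iff, Finset.not_nonempty_iff_eq_empty] at h
  have hsum := hp.1
  rcases h with h | rfl <;> simp at hsum

theorem sum_fst_pos (hp : Regular 𝒴 p) {y : ℝ} (hy : y ∈ 𝒴) (r₁ r₂ : Bool) :
    0 < ∑ x : 𝒳, p x y r₁ r₂ :=
  have := hp.nonempty.1
  sum_pos (fun x _ => hp.2 x y hy r₁ r₂) univ_nonempty

theorem sum_snd_pos (hp : Regular 𝒴 p) (x : 𝒳) (r₁ r₂ : Bool) :
    0 < ∑ y ∈ 𝒴, p x y r₁ r₂ :=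
  sum_pos (fun y hy => hp.2 x y hy r₁ r₂) hp.nonempty.2

theorem zetaD_pos (hp : Regular 𝒴 p) {y : ℝ} (hy : y ∈ 𝒴) : 0 < zetaD p y := by
  have := hp.nonempty.1
  exact div_pos (hp.sum_fst_pos hy true true)
    (sum_pos (fun x _ => sum_pos (fun r₂ _ => hp.2 x y hy true r₂) univ_nonempty) univ_nonempty)

theorem prR_pos (hp : Regular 𝒴 p) (r₁ r₂ : Bool) : 0 < prR 𝒴 p r₁ r₂ := by
  have := hp.nonempty.1
  exact sum_pos (fun x _ => hp.sum_snd_pos x r₁ r₂) univ_nonempty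

end Regular

theorem thetaD_eq :
    thetaD 𝒴 p = (∑ x : 𝒳, (∑ y ∈ 𝒴, p x y false true) * (betaD 𝒴 p x / alphaD 𝒴 p x)) /
      prR 𝒴 p false true :=
  sum_mul_div_sum _ _ _

theorem alphaD_eq (x : 𝒳) :
    alphaD 𝒴 p x = (∑ y ∈ 𝒴, p x y true true * (1 / zetaD p y)) / ∑ y ∈ 𝒴, p x y true true :=
  sum_mul_div_sum _ _ _

theorem betaD_eq (x : 𝒳) :
    betaD 𝒴 p x = (∑ y ∈ 𝒴, p x y true true * (y / zetaD p y)) / ∑ y ∈ 𝒴, p x y true true :=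
  sum_mul_div_sum _ _ _

theorem betaD_div_alphaD (hp : Regular 𝒴 p) (x : 𝒳) :
    betaD 𝒴 p x / alphaD 𝒴 p x =
      (∑ y ∈ 𝒴, p x y true true * (1 / zetaD p y) * y) /
        ∑ y ∈ 𝒴, p x y true true * (1 / zetaD p y) := by
  rw [alphaD_eq, betaD_eq, div_div_div_cancel_right₀ (hp.sum_snd_pos x true true).ne']
  congr 1
  exact sum_congr rfl fun y _ => by ring

theorem sum_mul_betaD_div_alphaD_sub_thetaD (hp : Regular 𝒴 p) :
    ∑ x : 𝒳, ∑ y ∈ 𝒴, p x y false true * (betaD 𝒴 p x / alphaD 𝒴 p x - thetaD 𝒴 p) = 0 := by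
  simp only [← sum_mul]
  rw [thetaD_eq]
  exact sum_mul_sub_div_sum_eq_zero _ _ _ (hp.prR_pos false true).ne'

theorem sum_mul_sub_betaD_div_alphaD (hp : Regular 𝒴 p) (x : 𝒳) :
    ∑ y ∈ 𝒴, p x y true true * (1 / zetaD p y) * (y - betaD 𝒴 p x / alphaD 𝒴 p x) = 0 := by
  rw [betaD_div_alphaD hp]
  refine sum_mul_sub_div_sum_eq_zero _ _ id (sum_pos (fun y hy => ?_) hp.nonempty.2).ne'
  exact mul_pos (hp.2 x y hy true true) (one_div_pos.2 (hp.zetaD_pos hy))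

/-- Inverse weighting by `ζ(y)` turns the units with `R₁ = R₂ = 1, Y = y` into all units with
`R₁ = 1, Y = y`. -/
theorem sum_inverse_zetaD_weighting (hp : Regular 𝒴 p) {y : ℝ} (hy : y ∈ 𝒴) :
    ∑ x : 𝒳, (p x y true false - p x y true true * (1 / zetaD p y - 1)) = 0 := by
  have hweight : (∑ x : 𝒳, p x y true true) * (1 / zetaD p y) =
      ∑ x : 𝒳, (p x y true true + p x y true false) := by
    rw [zetaD, one_div_div, mul_div_cancel₀ _ (hp.sum_fst_pos hy true true).ne']
    simp only [Fintype.sum_bool, add_comm]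
  rw [sum_sub_distrib, ← sum_mul, mul_sub, hweight, sum_add_distrib]
  ring

theorem sum_bool_mul_phiD (x : 𝒳) (y : ℝ) :
    ∑ r₁ : Bool, ∑ r₂ : Bool, p x y r₁ r₂ * phiD 𝒴 p x y r₁ r₂ =
      1 / prR 𝒴 p false true *
        (p x y false true * (betaD 𝒴 p x / alphaD 𝒴 p x - thetaD 𝒴 p) +
          1 / alphaD 𝒴 p x * ((1 - gammaD 𝒴 p x) / gammaD 𝒴 p x) *
            (p x y true true * (1 / zetaD p y) * (y - betaD 𝒴 p x / alphaD 𝒴 p x)) +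
          (p x y true false - p x y true true * (1 / zetaD p y - 1)) * deltaD 𝒴 p y) := by
  simp only [Fintype.sum_bool, phiD, bR, if_true, Bool.false_eq_true, if_false]
  ring

end Nuisances

/-- **The influence function has mean zero.**
For a regular observed-data distribution `P`, with nuisances `ζ, α, β, γ, δ` and target
`θ(P) = E(β(X)/α(X) | R₁ = 0, R₂ = 1)`, the influence function `φ(·; P)` satisfies
`E_P[φ(O; P)] = 0`. -/
theorem stmt8
    {𝒳 : Type*} [Fintype 𝒳] (𝒴 : Finset ℝ)
    (p : 𝒳 → ℝ → Bool → Bool → ℝ) (hp : Regular 𝒴 p) :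
    (∑ x : 𝒳, ∑ y ∈ 𝒴, ∑ r₁ : Bool, ∑ r₂ : Bool,
      p x y r₁ r₂ * phiD 𝒴 p x y r₁ r₂) = 0 := by
  simp only [sum_bool_mul_phiD, ← mul_sum, sum_add_distrib, sum_mul_betaD_div_alphaD_sub_thetaD hp,
    sum_mul_sub_betaD_div_alphaD hp, mul_zero, sum_const_zero, zero_add]
  rw [sum_comm, mul_eq_zero_of_right]
  exact sum_eq_zero fun y hy => by rw [← sum_mul, sum_inverse_zetaD_weighting hp hy, zero_mul]
end

section
/- Let P be a regular binary-outcome observed-data distribution. Define ρ = odds_P(Y=1 | R₁=1, R₂=1) / odds_P(Y=1 | R₁=1) and ξ(x) = odds_P(Y=1 | X=x, R₁=1, R₂=1), where odds(Y=1 | C) = P(Y=1 | C)/P(Y=0 | C). Define ζ(y) = P(R₂=1 | R₁=1, Y=y), α(x) = E(1/ζ(Y) | R₁=1, R₂=1, X=x), and β(x) = E(Y/ζ(Y) | R₁=1, R₂=1, X=x). Then E( β(X)/α(X) | R₁=0, R₂=1 ) = E( ξ(X)/(ρ + ξ(X)) | R₁=0, R₂=1 ). -/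
open Finset

/-- A regular binary-outcome observed-data distribution of `O = (X, Y, R₁, R₂)` on
`𝒳 × {0,1} × {0,1} × {0,1}` (`Bool`-valued, `true = 1`): a probability mass function with
every point of positive probability. -/
def RegularB {𝒳 : Type*} [Fintype 𝒳] (p : 𝒳 → Bool → Bool → Bool → ℝ) : Prop :=
  (∑ x : 𝒳, ∑ y : Bool, ∑ r₁ : Bool, ∑ r₂ : Bool, p x y r₁ r₂) = 1 ∧
    ∀ (x : 𝒳) (y r₁ r₂ : Bool), 0 < p x y r₁ r₂

/-- `P(R₁ = r₁, R₂ = r₂)`. -/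
noncomputable def pRB {𝒳 : Type*} [Fintype 𝒳] (p : 𝒳 → Bool → Bool → Bool → ℝ)
    (r₁ r₂ : Bool) : ℝ :=
  ∑ x : 𝒳, ∑ y : Bool, p x y r₁ r₂

/-- `P(X = x | R₁ = r₁, R₂ = r₂)`. -/
noncomputable def pXB {𝒳 : Type*} [Fintype 𝒳] (p : 𝒳 → Bool → Bool → Bool → ℝ)
    (r₁ r₂ : Bool) (x : 𝒳) : ℝ :=
  (∑ y : Bool, p x y r₁ r₂) / pRB p r₁ r₂

/-- `μ(x) = P(Y = 1 | X = x, R₁ = 1, R₂ = 1)`. -/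
noncomputable def muB {𝒳 : Type*} [Fintype 𝒳] (p : 𝒳 → Bool → Bool → Bool → ℝ) (x : 𝒳) : ℝ :=
  p x true true true / (∑ y : Bool, p x y true true)

/-- `ξ(x) = μ(x)/(1 − μ(x))`, the conditional odds `odds(Y = 1 | X = x, R₁ = 1, R₂ = 1)`. -/
noncomputable def xiB {𝒳 : Type*} [Fintype 𝒳] (p : 𝒳 → Bool → Bool → Bool → ℝ) (x : 𝒳) : ℝ :=
  muB p x / (1 - muB p x)

/-- The density ratio `ϖ(x) = P(X = x | R₁ = 0, R₂ = 1) / P(X = x | R₁ = 1, R₂ = 1)`. -/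
noncomputable def varpiB {𝒳 : Type*} [Fintype 𝒳] (p : 𝒳 → Bool → Bool → Bool → ℝ) (x : 𝒳) : ℝ :=
  pXB p false true x / pXB p true true x

/-- `θ_ρ(Q) = E_Q(ξ(X)/(ρ + ξ(X)) | R₁ = 0, R₂ = 1)`. -/
noncomputable def thetaB {𝒳 : Type*} [Fintype 𝒳] (ρ : ℝ)
    (p : 𝒳 → Bool → Bool → Bool → ℝ) : ℝ :=
  ∑ x : 𝒳, (xiB p x / (ρ + xiB p x)) * pXB p false true x

/-- The influence function `φ_ρ(o; Q)` at the observation `o = (x, y, r₁, r₂)`. -/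
noncomputable def phiB {𝒳 : Type*} [Fintype 𝒳] (ρ : ℝ)
    (p : 𝒳 → Bool → Bool → Bool → ℝ) (x : 𝒳) (y r₁ r₂ : Bool) : ℝ :=
  ρ * ((1 + xiB p x) / (ρ + xiB p x)) ^ 2 *
      (bR r₁ * bR r₂ * varpiB p x / pRB p true true) * (bR y - muB p x) +
    ((1 - bR r₁) * bR r₂ / pRB p false true) * (xiB p x / (ρ + xiB p x) - thetaB ρ p)

/-- `odds(Y = 1 | R₁ = 1, R₂ = 1)`. -/
noncomputable def odds11 {𝒳 : Type*} [Fintype 𝒳] (p : 𝒳 → Bool → Bool → Bool → ℝ) : ℝ :=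
  (∑ x : 𝒳, p x true true true) / (∑ x : 𝒳, p x false true true)

/-- `odds(Y = 1 | R₁ = 1)`. -/
noncomputable def odds1 {𝒳 : Type*} [Fintype 𝒳] (p : 𝒳 → Bool → Bool → Bool → ℝ) : ℝ :=
  (∑ x : 𝒳, ∑ r₂ : Bool, p x true true r₂) / (∑ x : 𝒳, ∑ r₂ : Bool, p x false true r₂)

/-- `ξ(x) = odds(Y = 1 | X = x, R₁ = 1, R₂ = 1)`. -/
noncomputable def oddsX {𝒳 : Type*} [Fintype 𝒳] (p : 𝒳 → Bool → Bool → Bool → ℝ) (x : 𝒳) : ℝ :=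
  p x true true true / p x false true true

/-- `ζ(y) = P(R₂ = 1 | R₁ = 1, Y = y)`. -/
noncomputable def zetaB {𝒳 : Type*} [Fintype 𝒳] (p : 𝒳 → Bool → Bool → Bool → ℝ)
    (y : Bool) : ℝ :=
  (∑ x : 𝒳, p x y true true) / (∑ x : 𝒳, ∑ r₂ : Bool, p x y true r₂)

/-- `α(x) = E(1/ζ(Y) | R₁ = 1, R₂ = 1, X = x)`. -/
noncomputable def alphaB {𝒳 : Type*} [Fintype 𝒳] (p : 𝒳 → Bool → Bool → Bool → ℝ)
    (x : 𝒳) : ℝ :=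
  ∑ y : Bool, (1 / zetaB p y) * (p x y true true / ∑ y' : Bool, p x y' true true)

/-- `β(x) = E(Y/ζ(Y) | R₁ = 1, R₂ = 1, X = x)`. -/
noncomputable def betaB {𝒳 : Type*} [Fintype 𝒳] (p : 𝒳 → Bool → Bool → Bool → ℝ)
    (x : 𝒳) : ℝ :=
  ∑ y : Bool, (bR y / zetaB p y) * (p x y true true / ∑ y' : Bool, p x y' true true)

/-! Pointwise in `x`, `β(x)/α(x)` is the `ζ`-reweighted posterior `(q₁/ζ(1)) / (q₀/ζ(0) + q₁/ζ(1))`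
with `q_y = P(X = x, Y = y, R₁ = 1, R₂ = 1)`. Dividing through by `q₀/ζ(1)` turns it into
`ξ(x) / (ζ(1)/ζ(0) + ξ(x))`, and `ζ(1)/ζ(0) = ρ` because both are the same ratio of four
marginal probabilities, grouped differently. -/

theorem div_div_add_div_eq_div_div_add_div {K : Type*} [Field K] {a₀ a₁ z₀ z₁ : K}
    (ha₀ : a₀ ≠ 0) (hz₀ : z₀ ≠ 0) (hz₁ : z₁ ≠ 0) :
    a₁ / z₁ / (a₀ / z₀ + a₁ / z₁) = a₁ / a₀ / (z₁ / z₀ + a₁ / a₀) := by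
  rw [← mul_div_mul_left _ _ (div_ne_zero hz₁ ha₀)]
  congr 1 <;> field_simp

section

variable {𝒳 : Type*} [Fintype 𝒳] (p : 𝒳 → Bool → Bool → Bool → ℝ)

theorem betaB_div_alphaB {x : 𝒳} (hx : ∑ y : Bool, p x y true true ≠ 0) :
    betaB p x / alphaB p x =
      p x true true true / zetaB p true /
        (p x false true true / zetaB p false + p x true true true / zetaB p true) := by
  simp only [betaB, alphaB, bR, Fintype.sum_bool, if_true, Bool.false_eq_true, if_false,
    zero_div, zero_mul, add_zero, one_div_mul_eq_div]
  rw [Fintype.sum_bool] at hx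
  rw [div_right_comm (p x true true true), div_right_comm (p x false true true),
    ← add_div, div_div_div_cancel_right₀ hx, add_comm]

theorem zetaB_div_zetaB : zetaB p true / zetaB p false = odds11 p / odds1 p :=
  div_div_div_comm _ _ _ _

theorem zetaB_pos [Nonempty 𝒳] (hp : ∀ (x : 𝒳) (y r₁ r₂ : Bool), 0 < p x y r₁ r₂) (y : Bool) :
    0 < zetaB p y :=
  div_pos (sum_pos (fun x _ ↦ hp x y true true) univ_nonempty)
    (sum_pos (fun x _ ↦ sum_pos (fun r₂ _ ↦ hp x y true r₂) univ_nonempty) univ_nonempty)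

end

/-- **Binary-outcome identification (Corollary 1 of the discussion).**
For a regular binary-outcome observed-data distribution, with
`ρ = odds(Y=1 | R₁=1, R₂=1)/odds(Y=1 | R₁=1)` and `ξ(x) = odds(Y=1 | X=x, R₁=1, R₂=1)`,
one has `E(β(X)/α(X) | R₁=0, R₂=1) = E(ξ(X)/(ρ + ξ(X)) | R₁=0, R₂=1)`. -/
theorem stmt9
    {𝒳 : Type*} [Fintype 𝒳] (p : 𝒳 → Bool → Bool → Bool → ℝ) (hp : RegularB p) :
    (∑ x : 𝒳, (betaB p x / alphaB p x) * pXB p false true x) =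
      ∑ x : 𝒳, (oddsX p x / (odds11 p / odds1 p + oddsX p x)) * pXB p false true x := by
  obtain ⟨-, hpos⟩ := hp
  refine sum_congr rfl fun x _ ↦ congrArg (· * pXB p false true x) ?_
  have : Nonempty 𝒳 := ⟨x⟩
  have hx : ∑ y : Bool, p x y true true ≠ 0 :=
    (sum_pos (fun y _ ↦ hpos x y true true) univ_nonempty).ne'
  rw [betaB_div_alphaB p hx, ← zetaB_div_zetaB,
    div_div_add_div_eq_div_div_add_div (hpos x false true true).ne'
      (zetaB_pos p hpos false).ne' (zetaB_pos p hpos true).ne']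
  rfl
end

section
/- Fix ρ > 0 and let P and P̄ be two regular binary-outcome observed-data distributions. For a distribution Q define μ_Q(x) = Q(Y=1 | X=x, R₁=1, R₂=1), ξ_Q(x) = μ_Q(x)/(1−μ_Q(x)), ϖ_Q(x) = Q(X=x | R₁=0, R₂=1)/Q(X=x | R₁=1, R₂=1), θ_ρ(Q) = E_Q( ξ_Q(X)/(ρ + ξ_Q(X)) | R₁=0, R₂=1 ), and for o = (x, y, r₁, r₂), φ_ρ(o; Q) = ρ ((1+ξ_Q(x))/(ρ+ξ_Q(x)))² (r₁ r₂ ϖ_Q(x)/Q(R₁=1, R₂=1)) (y − μ_Q(x)) + ((1−r₁) r₂ / Q(R₁=0, R₂=1)) ( ξ_Q(x)/(ρ + ξ_Q(x)) − θ_ρ(Q) ). Write ξ = ξ_P, ξ̄ = ξ_{P̄}, μ = μ_P, μ̄ = μ_{P̄}, ϖ = ϖ_P, ϖ̄ = ϖ_{P̄}, θ = θ_ρ(P), θ̄ = θ_ρ(P̄); define S₂f(x) = (μ(x)−μ̄(x))(1+ξ̄(x))² − (ξ(x)−ξ̄(x)) and S₂g(x) = (ξ(x)−ξ̄(x)) ρ/(ρ+ξ̄(x))²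 − ( ξ(x)/(ρ+ξ(x)) − ξ̄(x)/(ρ+ξ̄(x)) ); and write p₁₁(x) = P(X=x | R₁=1, R₂=1), p₀₁(x) = P(X=x | R₁=0, R₂=1). Then θ̄ − θ = Σ_o φ_ρ(o; P̄)(P̄(o) − P(o)) + R_θ(P̄; P), where R_θ(P̄; P) = (P(R₁=1,R₂=1)/P̄(R₁=1,R₂=1)) Σ_x ( ξ(x)/(ρ+ξ(x)) − ξ̄(x)/(ρ+ξ̄(x)) )(ϖ̄(x) − ϖ(x)) p₁₁(x) + (P(R₁=1,R₂=1)/P̄(R₁=1,R₂=1)) Σ_x ( S₂g(x) + S₂f(x) ρ/(ρ+ξ̄(x))² ) ϖ̄(x) p₁₁(x) + ( P(R₁=0,R₂=1)/P̄(R₁=0,R₂=1) − P(R₁=1,R₂=1)/P̄(R₁=1,R₂=1) ) Σ_x ( ξ̄(x)/(ρ+ξ̄(x)) − ξ(x)/(ρ+ξ(x)) ) p₀₁(x) + ( 1 − P(R₁=0,R₂=1)/P̄(R₁=0,R₂=1) )(θ̄ − θ). -/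
open Finset

/-- Second-order term `S₂f(x) = (μ(x) − μ̄(x))(1 + ξ̄(x))² − (ξ(x) − ξ̄(x))`
(`p` plays the role of `P`, `q` of `P̄`). -/
noncomputable def S2f {𝒳 : Type*} [Fintype 𝒳] (p q : 𝒳 → Bool → Bool → Bool → ℝ) (x : 𝒳) : ℝ :=
  (muB p x - muB q x) * (1 + xiB q x) ^ 2 - (xiB p x - xiB q x)

/-- Second-order term
`S₂g(x) = (ξ(x) − ξ̄(x)) ρ/(ρ + ξ̄(x))² − (ξ(x)/(ρ + ξ(x)) − ξ̄(x)/(ρ + ξ̄(x)))`. -/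
noncomputable def S2g {𝒳 : Type*} [Fintype 𝒳] (ρ : ℝ) (p q : 𝒳 → Bool → Bool → Bool → ℝ)
    (x : 𝒳) : ℝ :=
  (xiB p x - xiB q x) * ρ / (ρ + xiB q x) ^ 2 -
    (xiB p x / (ρ + xiB p x) - xiB q x / (ρ + xiB q x))

/-!
Against `P̄ − P`, the complete-case part of `φ_ρ(·; P̄)` integrates to
`−(P(R₁=1,R₂=1)/P̄(R₁=1,R₂=1)) Σₓ K(x) ϖ̄(x) p₁₁(x)` with `K = ρ((1+ξ̄)/(ρ+ξ̄))²(μ − μ̄)`, since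
`y − μ̄(x)` has conditional mean `0` under `P̄` and `μ(x) − μ̄(x)` under `P`. The part on
`R₁ = 0, R₂ = 1` is centred under `P̄`, so it integrates to
`(P(R₁=0,R₂=1)/P̄(R₁=0,R₂=1)) (θ̄ − Σₓ ξ̄/(ρ+ξ̄) p₀₁)`. In the remainder, `ϖ p₁₁ = p₀₁` and the fact
that `S₂g + S₂f ρ/(ρ+ξ̄)²` is the error of linearizing `ξ/(ρ+ξ)` in `μ` reduce everything to the
same two sums, and the theorem becomes a linear identity in them, `θ` and `θ̄`.
-/

section

variable {𝒳 : Type*} [Fintype 𝒳] {p q : 𝒳 → Bool → Bool → Bool → ℝ}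

theorem RegularB.sum_pos (hp : RegularB p) (x : 𝒳) (r₁ r₂ : Bool) :
    0 < ∑ y : Bool, p x y r₁ r₂ := by
  rw [Fintype.sum_bool]
  exact add_pos (hp.2 x true r₁ r₂) (hp.2 x false r₁ r₂)

theorem RegularB.pRB_pos (hp : RegularB p) (r₁ r₂ : Bool) : 0 < pRB p r₁ r₂ := by
  obtain ⟨x, -, -⟩ := Finset.exists_ne_zero_of_sum_ne_zero (hp.1.trans_ne one_ne_zero)
  exact Finset.sum_pos (fun x _ => hp.sum_pos x r₁ r₂) ⟨x, mem_univ x⟩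

theorem RegularB.muB_pos (hp : RegularB p) (x : 𝒳) : 0 < muB p x :=
  div_pos (hp.2 x true true true) (hp.sum_pos x true true)

theorem RegularB.muB_lt_one (hp : RegularB p) (x : 𝒳) : muB p x < 1 := by
  rw [muB, div_lt_one (hp.sum_pos x true true), Fintype.sum_bool]
  linarith [hp.2 x false true true]

theorem RegularB.xiB_pos (hp : RegularB p) (x : 𝒳) : 0 < xiB p x :=
  div_pos (hp.muB_pos x) (sub_pos.2 (hp.muB_lt_one x))

theorem pXB_mul_pRB {r₁ r₂ : Bool} (h : pRB p r₁ r₂ ≠ 0) (x : 𝒳) :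
    pXB p r₁ r₂ x * pRB p r₁ r₂ = ∑ y : Bool, p x y r₁ r₂ :=
  div_mul_cancel₀ _ h

theorem sum_pXB {r₁ r₂ : Bool} (h : pRB p r₁ r₂ ≠ 0) : ∑ x : 𝒳, pXB p r₁ r₂ x = 1 := by
  simp only [pXB]
  rw [← Finset.sum_div, div_eq_one_iff_eq h, pRB]

theorem sum_sub_mul_pXB {r₁ r₂ : Bool} (h : pRB p r₁ r₂ ≠ 0) (f : 𝒳 → ℝ) (c : ℝ) :
    ∑ x : 𝒳, (f x - c) * pXB p r₁ r₂ x = ∑ x : 𝒳, f x * pXB p r₁ r₂ x - c := by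
  simp only [sub_mul, sum_sub_distrib, ← mul_sum, sum_pXB h, mul_one]

theorem varpiB_mul_pXB {x : 𝒳} (h : pXB p true true x ≠ 0) :
    varpiB p x * pXB p true true x = pXB p false true x :=
  div_mul_cancel₀ _ h

theorem RegularB.sum_bR_sub_mul (hp : RegularB p) (x : 𝒳) (m : ℝ) :
    ∑ y : Bool, (bR y - m) * p x y true true = (muB p x - m) * ∑ y : Bool, p x y true true := by
  have hμ : muB p x * ∑ y : Bool, p x y true true = p x true true true :=
    div_mul_cancel₀ _ (hp.sum_pos x true true).ne'
  simp only [Fintype.sum_bool, bR, if_true, Bool.false_eq_true, if_false] at hμ ⊢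
  linear_combination -hμ

section phiB

variable (ρ : ℝ) (q : 𝒳 → Bool → Bool → Bool → ℝ) (x : 𝒳) (y : Bool)

theorem phiB_true_true :
    phiB ρ q x y true true =
      ρ * ((1 + xiB q x) / (ρ + xiB q x)) ^ 2 * varpiB q x / pRB q true true *
        (bR y - muB q x) := by
  simp only [phiB, bR, if_true]
  ring

theorem phiB_false_true :
    phiB ρ q x y false true = (xiB q x / (ρ + xiB q x) - thetaB ρ q) / pRB q false true := by
  simp only [phiB, bR, if_true, Bool.false_eq_true, if_false]
  ring

theorem phiB_false_right (r₁ : Bool) : phiB ρ q x y r₁ false = 0 := by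
  simp only [phiB, bR, Bool.false_eq_true, if_false]
  ring

end phiB

section firstOrder

variable (ρ : ℝ)

theorem sum_phiB_mul_sub_apply (hp : RegularB p) (hq : RegularB q) (x : 𝒳) :
    ∑ y : Bool, ∑ r₁ : Bool, ∑ r₂ : Bool, phiB ρ q x y r₁ r₂ * (q x y r₁ r₂ - p x y r₁ r₂) =
      -(ρ * ((1 + xiB q x) / (ρ + xiB q x)) ^ 2 * varpiB q x * (muB p x - muB q x) *
          ∑ y : Bool, p x y true true) / pRB q true true +
        (xiB q x / (ρ + xiB q x) - thetaB ρ q) *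
          (∑ y : Bool, q x y false true - ∑ y : Bool, p x y false true) / pRB q false true := by
  have hμp := hp.sum_bR_sub_mul x (muB q x)
  have hμq := hq.sum_bR_sub_mul x (muB q x)
  rw [sub_self, zero_mul] at hμq
  simp only [Fintype.sum_bool, phiB_true_true, phiB_false_true, phiB_false_right, zero_mul,
    add_zero] at hμp hμq ⊢
  linear_combination
    ρ * ((1 + xiB q x) / (ρ + xiB q x)) ^ 2 * varpiB q x / pRB q true true * (hμq - hμp)

theorem sum_phiB_mul_sub (hp : RegularB p) (hq : RegularB q) :
    ∑ x : 𝒳, ∑ y : Bool, ∑ r₁ : Bool, ∑ r₂ : Bool,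
        phiB ρ q x y r₁ r₂ * (q x y r₁ r₂ - p x y r₁ r₂) =
      pRB p false true / pRB q false true *
          (thetaB ρ q - ∑ x : 𝒳, xiB q x / (ρ + xiB q x) * pXB p false true x) -
        pRB p true true / pRB q true true *
          ∑ x : 𝒳, ρ * ((1 + xiB q x) / (ρ + xiB q x)) ^ 2 * (muB p x - muB q x) *
            varpiB q x * pXB p true true x := by
  have hq01 := (hq.pRB_pos false true).ne'
  have hp01 := (hp.pRB_pos false true).ne'
  have hp11 := (hp.pRB_pos true true).ne'
  have centred_q := sum_sub_mul_pXB hq01 (fun x => xiB q x / (ρ + xiB q x)) (thetaB ρ q)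
  have centred_p := sum_sub_mul_pXB hp01 (fun x => xiB q x / (ρ + xiB q x)) (thetaB ρ q)
  rw [← thetaB, sub_self] at centred_q
  calc _ = ∑ x : 𝒳, (-(pRB p true true / pRB q true true *
          (ρ * ((1 + xiB q x) / (ρ + xiB q x)) ^ 2 * (muB p x - muB q x) *
            varpiB q x * pXB p true true x)) +
        ((xiB q x / (ρ + xiB q x) - thetaB ρ q) * pXB q false true x -
          pRB p false true / pRB q false true *
            ((xiB q x / (ρ + xiB q x) - thetaB ρ q) * pXB p false true x))) := by
        refine sum_congr rfl fun x _ => ?_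
        rw [sum_phiB_mul_sub_apply ρ hp hq, ← pXB_mul_pRB hp11, ← pXB_mul_pRB hq01,
          ← pXB_mul_pRB hp01]
        field_simp
    _ = _ := by
        rw [sum_add_distrib, sum_neg_distrib, sum_sub_distrib, ← mul_sum, ← mul_sum, centred_q,
          centred_p]
        ring

end firstOrder

/-- `ρ((1 + ξ̄)/(ρ + ξ̄))²` is the derivative of `μ ↦ ξ/(ρ + ξ)` at `μ̄`, as `dξ/dμ = (1 + ξ)²`. -/
theorem S2g_add_S2f_mul (ρ : ℝ) (p q : 𝒳 → Bool → Bool → Bool → ℝ) (x : 𝒳)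
    (h : ρ + xiB q x ≠ 0) :
    S2g ρ p q x + S2f p q x * ρ / (ρ + xiB q x) ^ 2 =
      ρ * ((1 + xiB q x) / (ρ + xiB q x)) ^ 2 * (muB p x - muB q x) -
        (xiB p x / (ρ + xiB p x) - xiB q x / (ρ + xiB q x)) := by
  simp only [S2g, S2f]
  field_simp
  ring

theorem sum_remainder_eq {ρ : ℝ} (hρ : 0 < ρ) (hp : RegularB p) (hq : RegularB q) :
    ∑ x : 𝒳, (xiB p x / (ρ + xiB p x) - xiB q x / (ρ + xiB q x)) *
        (varpiB q x - varpiB p x) * pXB p true true x +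
      ∑ x : 𝒳, (S2g ρ p q x + S2f p q x * ρ / (ρ + xiB q x) ^ 2) *
        varpiB q x * pXB p true true x =
      ∑ x : 𝒳, ρ * ((1 + xiB q x) / (ρ + xiB q x)) ^ 2 * (muB p x - muB q x) *
          varpiB q x * pXB p true true x +
        ∑ x : 𝒳, (xiB q x / (ρ + xiB q x) - xiB p x / (ρ + xiB p x)) * pXB p false true x := by
  simp only [← sum_add_distrib]
  refine sum_congr rfl fun x _ => ?_
  have hϖ : varpiB p x * pXB p true true x = pXB p false true x :=
    varpiB_mul_pXB (div_pos (hp.sum_pos x true true) (hp.pRB_pos true true)).ne'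
  rw [S2g_add_S2f_mul ρ p q x (by linarith [hq.xiB_pos x])]
  linear_combination (xiB q x / (ρ + xiB q x) - xiB p x / (ρ + xiB p x)) * hϖ

end

/-- **Von Mises expansion in the binary-outcome case (Corollary 2 of the discussion).**
For `ρ > 0` and regular binary-outcome observed-data distributions `p = P` and `q = P̄`,
`θ̄ − θ = ∑_o φ_ρ(o; P̄)(P̄(o) − P(o)) + R_θ(P̄; P)` with the stated remainder. -/
theorem stmt11
    {𝒳 : Type*} [Fintype 𝒳] (ρ : ℝ) (hρ : 0 < ρ)
    (p q : 𝒳 → Bool → Bool → Bool → ℝ) (hp : RegularB p) (hq : RegularB q) :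
    thetaB ρ q - thetaB ρ p =
      (∑ x : 𝒳, ∑ y : Bool, ∑ r₁ : Bool, ∑ r₂ : Bool,
        phiB ρ q x y r₁ r₂ * (q x y r₁ r₂ - p x y r₁ r₂)) +
      ((pRB p true true / pRB q true true) *
          (∑ x : 𝒳, (xiB p x / (ρ + xiB p x) - xiB q x / (ρ + xiB q x)) *
            (varpiB q x - varpiB p x) * pXB p true true x) +
        (pRB p true true / pRB q true true) *
          (∑ x : 𝒳, (S2g ρ p q x + S2f p q x * ρ / (ρ + xiB q x) ^ 2) *
            varpiB q x * pXB p true true x) +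
        (pRB p false true / pRB q false true - pRB p true true / pRB q true true) *
          (∑ x : 𝒳, (xiB q x / (ρ + xiB q x) - xiB p x / (ρ + xiB p x)) *
            pXB p false true x) +
        (1 - pRB p false true / pRB q false true) * (thetaB ρ q - thetaB ρ p)) := by
  have hθ : ∑ x : 𝒳, (xiB q x / (ρ + xiB q x) - xiB p x / (ρ + xiB p x)) * pXB p false true x =
      ∑ x : 𝒳, xiB q x / (ρ + xiB q x) * pXB p false true x - thetaB ρ p := by
    simp only [sub_mul, sum_sub_distrib, thetaB]
  rw [sum_phiB_mul_sub ρ hp hq, ← mul_add, sum_remainder_eq hρ hp hq, hθ]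
  ring
end

section
/- Fix ρ > 0 and let P and P̄ be two regular binary-outcome observed-data distributions, with nuisances μ, ξ, ϖ, θ under P and μ̄, ξ̄, ϖ̄, θ̄ under P̄ (as defined in the context), and let φ_ρ(·; P̄) be the influence function computed under P̄: φ_ρ(o; P̄) = ρ ((1+ξ̄(x))/(ρ+ξ̄(x)))² (r₁ r₂ ϖ̄(x)/P̄(R₁=1, R₂=1)) (y − μ̄(x)) + ((1−r₁) r₂ / P̄(R₁=0, R₂=1)) ( ξ̄(x)/(ρ + ξ̄(x)) − θ̄ ). Then Σ_o φ_ρ(o; P̄) P(o) = (P(R₁=1,R₂=1)/P̄(R₁=1,R₂=1)) Σ_x (ρ/(ρ+ξ̄(x))²) (1+ξ̄(x))² (μ(x) − μ̄(x)) ϖ̄(x) P(X=x | R₁=1, R₂=1) + (P(R₁=0,R₂=1)/P̄(R₁=0,R₂=1)) Σ_x ( ξ̄(x)/(ρ+ξ̄(x)) − θ̄ ) P(X=x | R₁=0, R₂=1). -/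
open Finset

/-!
`φ_ρ(·; P̄)` is a combination of the indicators of the missingness patterns `R = (1,1)` and
`R = (0,1)` whose coefficients depend on `x` only, except for the factor `y − μ̄(x)` in the
first. Integrating against `P`, summing out `R` keeps the two slices `P(x, y, 1, 1)` and
`P(x, y, 0, 1)`; summing out `y` turns `y − μ̄(x)` into `(μ(x) − μ̄(x)) P(X = x, R = (1,1))`, and
`P(X = x, R = r) = P(R = r) P(X = x | R = r)`.
-/

section ObservedData

variable {𝒳 : Type*} [Fintype 𝒳]

theorem sum_missingness_pattern (a b : ℝ) (f : Bool → Bool → ℝ) :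
    ∑ r₁ : Bool, ∑ r₂ : Bool, (bR r₁ * bR r₂ * a + (1 - bR r₁) * bR r₂ * b) * f r₁ r₂ =
      a * f true true + b * f false true := by
  simp [bR]

theorem pRB_mul_pXB (p : 𝒳 → Bool → Bool → Bool → ℝ) {r₁ r₂ : Bool} (h : pRB p r₁ r₂ ≠ 0)
    (x : 𝒳) : pRB p r₁ r₂ * pXB p r₁ r₂ x = ∑ y : Bool, p x y r₁ r₂ :=
  mul_div_cancel₀ _ h

theorem sum_bR_sub_mul_eq_muB_sub_mul (p : 𝒳 → Bool → Bool → Bool → ℝ) (x : 𝒳)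
    (h : ∑ y : Bool, p x y true true ≠ 0) (m : ℝ) :
    ∑ y : Bool, (bR y - m) * p x y true true = (muB p x - m) * ∑ y : Bool, p x y true true := by
  rw [sub_mul, muB, div_mul_cancel₀ _ h, Fintype.sum_bool, Fintype.sum_bool]
  simp only [bR, if_true, Bool.false_eq_true, if_false]
  ring

theorem pRB_pos_of_pos {p : 𝒳 → Bool → Bool → Bool → ℝ} (hp : ∀ x y r₁ r₂, 0 < p x y r₁ r₂)
    (x : 𝒳) (r₁ r₂ : Bool) : 0 < pRB p r₁ r₂ :=
  sum_pos (fun x _ => sum_pos (fun y _ => hp x y r₁ r₂) univ_nonempty) ⟨x, mem_univ x⟩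

theorem phiB_eq_pattern (ρ : ℝ) (q : 𝒳 → Bool → Bool → Bool → ℝ)
    (x : 𝒳) (y r₁ r₂ : Bool) :
    phiB ρ q x y r₁ r₂ =
      bR r₁ * bR r₂ * (ρ / (ρ + xiB q x) ^ 2 * (1 + xiB q x) ^ 2 * varpiB q x / pRB q true true *
          (bR y - muB q x)) +
        (1 - bR r₁) * bR r₂ * ((xiB q x / (ρ + xiB q x) - thetaB ρ q) / pRB q false true) := by
  rw [phiB, div_pow]; ring

end ObservedData

theorem stmt13_general
    {𝒳 : Type*} [Fintype 𝒳] (ρ : ℝ)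
    (p q : 𝒳 → Bool → Bool → Bool → ℝ) (hp : RegularB p) :
    (∑ x : 𝒳, ∑ y : Bool, ∑ r₁ : Bool, ∑ r₂ : Bool,
      phiB ρ q x y r₁ r₂ * p x y r₁ r₂) =
      (pRB p true true / pRB q true true) *
        (∑ x : 𝒳, (ρ / (ρ + xiB q x) ^ 2) * (1 + xiB q x) ^ 2 * (muB p x - muB q x) *
          varpiB q x * pXB p true true x) +
      (pRB p false true / pRB q false true) *
        (∑ x : 𝒳, (xiB q x / (ρ + xiB q x) - thetaB ρ q) * pXB p false true x) := by
  rw [mul_sum, mul_sum, ← sum_add_distrib]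
  refine sum_congr rfl fun x _ => ?_
  simp_rw [phiB_eq_pattern, sum_missingness_pattern, sum_add_distrib, mul_assoc _ (bR _ - _),
    ← mul_sum, sum_bR_sub_mul_eq_muB_sub_mul p x (sum_pos (fun y _ => hp.2 x y true true) univ_nonempty).ne',
    ← pRB_mul_pXB p (pRB_pos_of_pos hp.2 x _ _).ne']
  ring

/-- **Expectation of the `P̄`-influence function under `P` (appendix computation).**
For `ρ > 0` and regular binary-outcome observed-data distributions `p = P` and `q = P̄`,
`∑_o φ_ρ(o; P̄) P(o)
  = (P(R₁=1,R₂=1)/P̄(R₁=1,R₂=1)) ∑_x (ρ/(ρ+ξ̄(x))²)(1+ξ̄(x))²(μ(x)−μ̄(x)) ϖ̄(x) P(X=x | R₁=1,R₂=1)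
    + (P(R₁=0,R₂=1)/P̄(R₁=0,R₂=1)) ∑_x (ξ̄(x)/(ρ+ξ̄(x)) − θ̄) P(X=x | R₁=0,R₂=1)`. -/
theorem stmt13
    {𝒳 : Type*} [Fintype 𝒳] (ρ : ℝ) (hρ : 0 < ρ)
    (p q : 𝒳 → Bool → Bool → Bool → ℝ) (hp : RegularB p) (hq : RegularB q) :
    (∑ x : 𝒳, ∑ y : Bool, ∑ r₁ : Bool, ∑ r₂ : Bool,
      phiB ρ q x y r₁ r₂ * p x y r₁ r₂) =
      (pRB p true true / pRB q true true) *
        (∑ x : 𝒳, (ρ / (ρ + xiB q x) ^ 2) * (1 + xiB q x) ^ 2 * (muB p x - muB q x) *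
          varpiB q x * pXB p true true x) +
      (pRB p false true / pRB q false true) *
        (∑ x : 𝒳, (xiB q x / (ρ + xiB q x) - thetaB ρ q) * pXB p false true x) :=
  stmt13_general ρ p q hp
end
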